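/- arXiv:1402.5786 — 5 statements merged into one kernel-verified Lean document; each statement's English description precedes it below -/
import Mathlib

section
/- The map T : ∫bv → ℓ₁ defined by (Tx)₁ = x₁ and (Tx)ₖ = k·xₖ − (k−1)·xₖ₋₁ for k ≥ 2 is a linear isometric bijection; hence ∫bv is norm isomorphic to ℓ₁. -/
/-- The `k`-th term `|k·xₖ − (k−1)·xₖ₋₁|` of the `∫bv`-norm (with the
convention `x₀ = 0`, realized here by the vanishing coefficients at `k = 0, 1`;
sequences are indexed from 1 and index 0 is a dummy). -/
noncomputable def bvIntTerm (x : ℕ → ℂ) (k : ℕ) : ℝ :=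
  ‖(k : ℂ) * x k - ((k - 1 : ℕ) : ℂ) * x (k - 1)‖

/-- Membership in `∫bv`. -/
def MemBvInt (x : ℕ → ℂ) : Prop := Summable (bvIntTerm x)

/-- The norm `‖x‖ = ∑ₖ |k·xₖ − (k−1)·xₖ₋₁|` on `∫bv`. -/
noncomputable def bvIntNorm (x : ℕ → ℂ) : ℝ := ∑' k : ℕ, bvIntTerm x k

/-- The transformation `T`, `(Tx)ₖ = k·xₖ − (k−1)·xₖ₋₁` (so `(Tx)₁ = x₁`). -/
noncomputable def Tmap (x : ℕ → ℂ) (k : ℕ) : ℂ :=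
  (k : ℂ) * x k - ((k - 1 : ℕ) : ℂ) * x (k - 1)

/-- `T : ∫bv → ℓ₁` is a linear isometric bijection, hence `∫bv` is norm
isomorphic to `ℓ₁` (sequences indexed from 1; `y 0 = 0` is the dummy-index
normalization for members of `ℓ₁`). -/
theorem bvInt_isomorphic_l1 :
    (∀ x y : ℕ → ℂ, Tmap (x + y) = Tmap x + Tmap y) ∧
    (∀ (c : ℂ) (x : ℕ → ℂ), Tmap (c • x) = c • Tmap x) ∧
    (∀ x : ℕ → ℂ, MemBvInt x →
      Summable (fun k => ‖Tmap x k‖) ∧ (∑' k : ℕ, ‖Tmap x k‖) = bvIntNorm x) ∧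
    (∀ x x' : ℕ → ℂ, MemBvInt x → MemBvInt x' →
      (∀ k : ℕ, 1 ≤ k → Tmap x k = Tmap x' k) → ∀ k : ℕ, 1 ≤ k → x k = x' k) ∧
    (∀ y : ℕ → ℂ, Summable (fun k => ‖y k‖) → y 0 = 0 →
      ∃ x : ℕ → ℂ, MemBvInt x ∧ Tmap x = y) := by
  refine ⟨?_, ?_, ?_, ?_, ?_⟩
  · intro x y; funext k; simp [Tmap]; ring
  · intro c x; funext k; simp [Tmap]; ring
  · intro x hx
    have h : (fun k => ‖Tmap x k‖) = bvIntTerm x := rfl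
    exact ⟨h ▸ hx, by rw [h]; rfl⟩
  · intro x x' _ _ h
    intro k hk
    induction k, hk using Nat.le_induction with
    | base =>
      have := h 1 le_rfl
      simpa [Tmap] using this
    | succ n hn ih =>
      have h1 := h (n + 1) (by omega)
      have hn1 : (n + 1) - 1 = n := rfl
      simp only [Tmap, hn1, ih] at h1
      have : ((n + 1 : ℕ) : ℂ) * x (n + 1) = ((n + 1 : ℕ) : ℂ) * x' (n + 1) := by
        linear_combination h1
      exact mul_left_cancel₀ (Nat.cast_ne_zero.mpr (Nat.succ_ne_zero n)) this
  · intro y hy hy0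
    set x : ℕ → ℂ := fun k =>
      if k = 0 then 0 else (∑ j ∈ Finset.range (k + 1), y j) / (k : ℂ) with hxdef
    have key : ∀ k : ℕ, (k : ℂ) * x k = ∑ j ∈ Finset.range (k + 1), y j := by
      intro k
      rcases Nat.eq_zero_or_pos k with hk | hk
      · subst hk; simp [hxdef, hy0]
      · have hk0 : k ≠ 0 := by omega
        have : (k : ℂ) ≠ 0 := Nat.cast_ne_zero.mpr hk0
        simp [hxdef, hk0, mul_div_cancel₀ _ this]
    have hT : Tmap x = y := by
      funext k
      rcases Nat.eq_zero_or_pos k with hk | hk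
      · subst hk; simp [Tmap, hy0]
      · obtain ⟨m, rfl⟩ := Nat.exists_eq_succ_of_ne_zero (by omega : k ≠ 0)
        show ((m + 1 : ℕ) : ℂ) * x (m + 1) - ((m + 1 - 1 : ℕ) : ℂ) * x (m + 1 - 1) = y (m + 1)
        rw [show m + 1 - 1 = m from rfl, key, key, Finset.sum_range_succ]
        ring
    refine ⟨x, ?_, hT⟩
    have heq : bvIntTerm x = fun k => ‖y k‖ := by
      funext k; show ‖Tmap x k‖ = ‖y k‖; rw [hT]
    unfold MemBvInt
    rw [heq]; exact hy
end

section
/- The α-dual of ∫bv equals d(ℓ₁): a sequence a = (aₖ) satisfies ∑ₖ |aₖ xₖ| < ∞ for all x ∈ ∫bv if and only if ∑ₖ |aₖ|/k < ∞. -/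
lemma bvIntTerm_nonneg (x : ℕ → ℂ) (k : ℕ) : 0 ≤ bvIntTerm x k := norm_nonneg _

lemma bvIntTerm_succ (x : ℕ → ℂ) (k : ℕ) :
    bvIntTerm x (k + 1) = dist (((k + 1 : ℕ) : ℂ) * x (k + 1)) ((k : ℂ) * x k) := by
  simp [bvIntTerm, dist_eq_norm]

lemma bvIntTerm_inv_natCast_eq_zero {k : ℕ} (hk : 1 < k) :
    bvIntTerm (fun n => (n : ℂ)⁻¹) k = 0 := by
  have hk0 : (k : ℂ) ≠ 0 := by exact_mod_cast (by omega : k ≠ 0)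
  have hk1 : ((k - 1 : ℕ) : ℂ) ≠ 0 := by exact_mod_cast (by omega : k - 1 ≠ 0)
  simp [bvIntTerm, mul_inv_cancel₀ hk0, mul_inv_cancel₀ hk1]

lemma memBvInt_inv_natCast : MemBvInt (fun n => (n : ℂ)⁻¹) :=
  summable_of_ne_finset_zero (s := Finset.range 2) fun _ hk =>
    bvIntTerm_inv_natCast_eq_zero (by simpa using hk)

lemma norm_natCast_mul_le_tsum_bvIntTerm {x : ℕ → ℂ} (hx : MemBvInt x) (n : ℕ) :
    ‖(n : ℂ) * x n‖ ≤ ∑' k, bvIntTerm x k :=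
  calc ‖(n : ℂ) * x n‖ = dist ((0 : ℕ) * x 0 : ℂ) ((n : ℂ) * x n) := by simp
    _ ≤ ∑ i ∈ Finset.range n, dist ((i : ℂ) * x i) (((i + 1 : ℕ) : ℂ) * x (i + 1)) :=
      dist_le_range_sum_dist (fun k => (k : ℂ) * x k) n
    _ = ∑ i ∈ Finset.range n, bvIntTerm x (i + 1) := by
      simp only [bvIntTerm_succ, dist_comm]
    _ ≤ ∑ i ∈ Finset.range (n + 1), bvIntTerm x i := by
      rw [Finset.sum_range_succ']
      exact le_add_of_nonneg_right (bvIntTerm_nonneg x 0)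
    _ ≤ ∑' k, bvIntTerm x k := hx.sum_le_tsum _ fun i _ => bvIntTerm_nonneg x i

lemma norm_le_tsum_bvIntTerm_div {x : ℕ → ℂ} (hx : MemBvInt x) {n : ℕ} (hn : n ≠ 0) :
    ‖x n‖ ≤ (∑' k, bvIntTerm x k) / n := by
  rw [le_div_iff₀ (by positivity), mul_comm, ← Complex.norm_natCast, ← norm_mul]
  exact norm_natCast_mul_le_tsum_bvIntTerm hx n

/-- The α-dual of `∫bv` equals `d(ℓ₁)`: a sequence `a` satisfies
`∑ₖ |aₖ xₖ| < ∞` for all `x ∈ ∫bv` if and only if `∑ₖ |aₖ|/k < ∞`. -/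
theorem bvInt_alpha_dual (a : ℕ → ℂ) :
    (∀ x : ℕ → ℂ, MemBvInt x → Summable (fun k : ℕ => ‖a k * x k‖)) ↔
    Summable (fun k : ℕ => ‖a k‖ / (k : ℝ)) := by
  refine ⟨fun h => ?_, fun ha x hx => ?_⟩
  · simpa [div_eq_mul_inv] using h _ memBvInt_inv_natCast
  · refine Summable.of_norm_bounded_eventually_nat (ha.mul_left (∑' k, bvIntTerm x k)) ?_
    filter_upwards [Filter.eventually_ne_atTop 0] with k hk
    calc ‖‖a k * x k‖‖ = ‖a k‖ * ‖x k‖ := by rw [norm_norm, norm_mul]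
      _ ≤ ‖a k‖ * ((∑' k, bvIntTerm x k) / k) :=
        mul_le_mul_of_nonneg_left (norm_le_tsum_bvIntTerm_div hx hk) (norm_nonneg _)
      _ = (∑' k, bvIntTerm x k) * (‖a k‖ / k) := by ring
end

section
/- The α-dual of d(bv) equals ∫ℓ₁: a sequence a satisfies ∑ₖ |aₖ xₖ| < ∞ for all x ∈ d(bv) if and only if ∑ₖ k·|aₖ| < ∞. -/
open Filter Topology

noncomputable def dbvTerm (x : ℕ → ℂ) (k : ℕ) : ℝ :=
  ‖x k / (k : ℂ) - x (k - 1) / ((k - 1 : ℕ) : ℂ)‖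

def MemDbv (x : ℕ → ℂ) : Prop := Summable (dbvTerm x)

lemma dbvTerm_zero (x : ℕ → ℂ) : dbvTerm x 0 = 0 := by
  simp [dbvTerm]

lemma norm_div_le_tsum (x : ℕ → ℂ) (hx : MemDbv x) (n : ℕ) :
    ‖x n / (n : ℂ)‖ ≤ ∑' k, dbvTerm x k := by
  set y : ℕ → ℂ := fun k => x k / (k : ℂ) with hy
  have hy0 : y 0 = 0 := by simp [hy]
  have htel : y n = ∑ i ∈ Finset.range n, (y (i + 1) - y i) := by
    rw [Finset.sum_range_sub y, hy0, sub_zero]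
  have hterm : ∀ i, ‖y (i + 1) - y i‖ = dbvTerm x (i + 1) := by
    intro i; simp [hy, dbvTerm]
  have hshift : Summable (fun k => dbvTerm x (k + 1)) :=
    (summable_nat_add_iff 1).mpr hx
  calc ‖y n‖ = ‖∑ i ∈ Finset.range n, (y (i + 1) - y i)‖ := by rw [← htel]
    _ ≤ ∑ i ∈ Finset.range n, ‖y (i + 1) - y i‖ := norm_sum_le _ _
    _ = ∑ i ∈ Finset.range n, dbvTerm x (i + 1) :=
        Finset.sum_congr rfl fun i _ => hterm i
    _ ≤ ∑' k, dbvTerm x (k + 1) :=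
        Summable.sum_le_tsum _ (fun i _ => norm_nonneg _) hshift
    _ = ∑' k, dbvTerm x k := by
        have := Summable.sum_add_tsum_nat_add 1 hx
        simp [dbvTerm_zero] at this
        linarith [this]

lemma easy_dir (a : ℕ → ℂ) (hs : Summable (fun k : ℕ => (k : ℝ) * ‖a k‖))
    (x : ℕ → ℂ) (hx : MemDbv x) : Summable (fun k : ℕ => ‖a k * x k‖) := by
  set C := ∑' k, dbvTerm x k with hC
  have hC0 : 0 ≤ C := tsum_nonneg fun k => norm_nonneg _
  rw [← summable_nat_add_iff 1]
  have hs' : Summable (fun k : ℕ => ((k + 1 : ℕ) : ℝ) * ‖a (k + 1)‖ * C) :=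
    ((summable_nat_add_iff 1).mpr hs).mul_right C
  refine hs'.of_nonneg_of_le (fun k => norm_nonneg _) fun k => ?_
  have hb := norm_div_le_tsum x hx (k + 1)
  have hne : ((k + 1 : ℕ) : ℂ) ≠ 0 := Nat.cast_ne_zero.mpr (Nat.succ_ne_zero k)
  have hxk : ‖x (k + 1)‖ ≤ ((k + 1 : ℕ) : ℝ) * C := by
    have : ‖x (k + 1) / ((k + 1 : ℕ) : ℂ)‖ = ‖x (k + 1)‖ / ((k + 1 : ℕ) : ℝ) := by
      rw [norm_div, Complex.norm_natCast]
    rw [this] at hb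
    have hpos : (0 : ℝ) < ((k + 1 : ℕ) : ℝ) := by positivity
    rw [div_le_iff₀ hpos] at hb
    linarith [hb]
  calc ‖a (k + 1) * x (k + 1)‖ = ‖a (k + 1)‖ * ‖x (k + 1)‖ := norm_mul _ _
    _ ≤ ‖a (k + 1)‖ * (((k + 1 : ℕ) : ℝ) * C) := by
        exact mul_le_mul_of_nonneg_left hxk (norm_nonneg _)
    _ = ((k + 1 : ℕ) : ℝ) * ‖a (k + 1)‖ * C := by ring


lemma hard_dir (a : ℕ → ℂ)
    (H : ∀ x : ℕ → ℂ, MemDbv x → Summable (fun k : ℕ => ‖a k * x k‖)) :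
    Summable (fun k : ℕ => (k : ℝ) * ‖a k‖) := by
  by_contra hns
  set b : ℕ → ℝ := fun k => (k : ℝ) * ‖a k‖ with hbdef
  have hb0 : ∀ k, 0 ≤ b k := fun k => by positivity
  set S : ℕ → ℝ := fun n => ∑ k ∈ Finset.range n, b k with hSdef
  have hS : Tendsto S atTop atTop :=
    (not_summable_iff_tendsto_nat_atTop_of_nonneg hb0).mp hns
  have hS0 : ∀ n, 0 ≤ S n := fun n => Finset.sum_nonneg fun k _ => hb0 k
  have hSmono : Monotone S := fun p q h =>
    Finset.sum_le_sum_of_subset_of_nonneg (Finset.range_subset_range.mpr h)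
      (fun k _ _ => hb0 k)
  set y : ℕ → ℝ := fun k => 1 / (1 + S (k + 1)) with hydef
  have hden : ∀ k, (0 : ℝ) < 1 + S (k + 1) := fun k => by linarith [hS0 (k + 1)]
  have hypos : ∀ k, 0 < y k := fun k => by
    simp only [hydef]; positivity
  have hyle : ∀ k, y k ≤ 1 := fun k => by
    rw [hydef]
    rw [div_le_one (hden k)]
    linarith [hS0 (k + 1)]
  have hyanti : ∀ p q, p ≤ q → y q ≤ y p := by
    intro p q h
    exact one_div_le_one_div_of_le (hden p) (by linarith [hSmono (show p + 1 ≤ q + 1 by omega)])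
  set x : ℕ → ℂ := fun k => (k : ℂ) * ((y k : ℝ) : ℂ) with hxdef
  -- values of dbvTerm x
  have hx0 : x 0 = 0 := by simp [hxdef]
  have hdiv : ∀ k : ℕ, k ≠ 0 → x k / (k : ℂ) = ((y k : ℝ) : ℂ) := by
    intro k hk
    rw [hxdef]
    exact mul_div_cancel_left₀ _ (Nat.cast_ne_zero.mpr hk)
  have hd0 : dbvTerm x 0 = 0 := by simp [dbvTerm]
  have hd1 : dbvTerm x 1 = y 1 := by
    simp only [dbvTerm]
    rw [hdiv 1 one_ne_zero]
    simp [hx0, abs_of_nonneg (hypos 1).le]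
  have hd2 : ∀ k : ℕ, dbvTerm x (k + 2) = y (k + 1) - y (k + 2) := by
    intro k
    have e : k + 2 - 1 = k + 1 := by omega
    simp only [dbvTerm, e]
    rw [hdiv (k + 2) (by omega), hdiv (k + 1) (by omega)]
    rw [← Complex.ofReal_sub, Complex.norm_real, Real.norm_eq_abs,
      abs_of_nonpos (by linarith [hyanti (k + 1) (k + 2) (by omega)])]
    ring
  have hMem : MemDbv x := by
    apply summable_of_sum_range_le (c := 2) (fun k => norm_nonneg _)
    have key : ∀ n, ∑ i ∈ Finset.range (n + 2), dbvTerm x i + y (n + 1) = 2 * y 1 := by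
      intro n
      induction n with
      | zero => simp [Finset.sum_range_succ, hd0, hd1]; ring
      | succ m ih =>
        rw [Finset.sum_range_succ]
        have : m + 1 + 2 - 1 = m + 2 := by omega
        rw [hd2 m]
        linarith [ih]
    intro n
    match n with
    | 0 => simp
    | 1 => simp [Finset.sum_range_succ, hd0]
    | (n + 2) =>
      show ∑ i ∈ Finset.range (n + 2), dbvTerm x i ≤ 2
      have := key n
      have h1 := hyle 1
      have h2 := (hypos (n + 1)).le
      linarith
  -- the contradiction
  have hsum := H x hMem
  have ht : ∀ k, ‖a k * x k‖ = b k * y k := by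
    intro k
    rw [hxdef, hbdef]
    simp only [norm_mul, Complex.norm_natCast, Complex.norm_real, Real.norm_eq_abs,
      abs_of_nonneg (hypos k).le]
    ring
  set t : ℕ → ℝ := fun k => ‖a k * x k‖ with htdef
  have ht0 : ∀ k, 0 ≤ t k := fun k => norm_nonneg _
  set L := ∑' k, t k with hL
  set T : ℕ → ℝ := fun n => ∑ i ∈ Finset.range n, t i with hT
  have hTle : ∀ n, T n ≤ L := fun n =>
    Summable.sum_le_tsum _ (fun i _ => ht0 i) hsum
  have hTtend : Tendsto T atTop (𝓝 L) := hsum.hasSum.tendsto_sum_nat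
  obtain ⟨m, hm⟩ := (hTtend.eventually (eventually_gt_nhds
    (show L - 1 / 2 < L by linarith))).exists
  obtain ⟨n, hn2, hn1⟩ :=
    ((hS.eventually_gt_atTop (1 + 2 * S m)).and (eventually_ge_atTop m)).exists
  have hIco : ∑ k ∈ Finset.Ico m n, t k = T n - T m :=
    Finset.sum_Ico_eq_sub t hn1
  have hlow : (S n - S m) / (1 + S n) ≤ ∑ k ∈ Finset.Ico m n, t k := by
    have : ∀ k ∈ Finset.Ico m n, b k / (1 + S n) ≤ t k := by
      intro k hk
      have hkn : k + 1 ≤ n := by simp only [Finset.mem_Ico] at hk; omega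
      have h2 := ht k
      have h3 : y k = 1 / (1 + S (k + 1)) := rfl
      have h4 : t k = ‖a k * x k‖ := rfl
      rw [h4, h2, h3, mul_one_div]
      have h5 : 1 + S (k + 1) ≤ 1 + S n := by linarith [hSmono hkn]
      exact div_le_div_of_nonneg_left (hb0 k) (hden k) h5 |>.trans_eq rfl
    calc (S n - S m) / (1 + S n) = (∑ k ∈ Finset.Ico m n, b k) / (1 + S n) := by
          rw [Finset.sum_Ico_eq_sub b hn1]
      _ = ∑ k ∈ Finset.Ico m n, b k / (1 + S n) := by rw [Finset.sum_div]
      _ ≤ ∑ k ∈ Finset.Ico m n, t k := Finset.sum_le_sum this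
  have hhalf : 1 / 2 < (S n - S m) / (1 + S n) := by
    rw [div_lt_div_iff₀ (by norm_num) (by linarith [hS0 n])]
    linarith [hS0 m]
  have := hTle n
  rw [hIco] at hlow
  linarith

/-- The α-dual of `d(bv)` equals `∫ℓ₁`: a sequence `a` satisfies
`∑ₖ |aₖ xₖ| < ∞` for all `x ∈ d(bv)` if and only if `∑ₖ k·|aₖ| < ∞`. -/
theorem dbv_alpha_dual (a : ℕ → ℂ) :
    (∀ x : ℕ → ℂ, MemDbv x → Summable (fun k : ℕ => ‖a k * x k‖)) ↔
    Summable (fun k : ℕ => (k : ℝ) * ‖a k‖) := by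
  exact ⟨hard_dir a, fun hs x hx => easy_dir a hs x hx⟩
end

section
/- The γ-dual of ∫bv equals d(bs): a sequence a satisfies sup_n |∑_{k=1}^n aₖ xₖ| < ∞ for all x ∈ ∫bv if and only if (aₖ/k)ₖ has bounded partial sums. -/
/-- The γ-dual of `∫bv` equals `d(bs)`: `sup_n |∑_{k=1}^n aₖ xₖ| < ∞` for all
`x ∈ ∫bv` if and only if `(aₖ/k)ₖ` has bounded partial sums. -/
theorem bvInt_gamma_dual (a : ℕ → ℂ) :
    (∀ x : ℕ → ℂ, MemBvInt x →
      ∃ C : ℝ, ∀ n : ℕ, ‖∑ k ∈ Finset.range (n + 1), a k * x k‖ ≤ C) ↔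
    ∃ C : ℝ, ∀ n : ℕ, ‖∑ k ∈ Finset.range (n + 1), a k / (k : ℂ)‖ ≤ C := by
  constructor
  · intro h
    have hx : MemBvInt (fun k => ((k : ℂ))⁻¹) := by
      have he : (bvIntTerm fun k => ((k : ℂ))⁻¹) = fun k => if k = 1 then 1 else 0 := by
        funext k
        match k with
        | 0 => simp [bvIntTerm]
        | 1 => simp [bvIntTerm]
        | (m + 2) =>
          have h1 : ((m : ℂ) + 2) ≠ 0 := by
            have : ((m + 2 : ℕ) : ℂ) ≠ 0 := Nat.cast_ne_zero.2 (by omega)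
            push_cast at this; exact this
          have h2 : ((m : ℂ) + 1) ≠ 0 := by
            have : ((m + 1 : ℕ) : ℂ) ≠ 0 := Nat.cast_ne_zero.2 (by omega)
            push_cast at this; exact this
          simp [bvIntTerm, mul_inv_cancel₀ h1, mul_inv_cancel₀ h2]
      rw [MemBvInt, he]
      exact summable_of_ne_finset_zero (s := {1})
        (fun k hk => by simp at hk ⊢; simp [hk])
    obtain ⟨C, hC⟩ := h _ hx
    exact ⟨C, fun n => by simpa [div_eq_mul_inv] using hC n⟩
  · rintro ⟨C, hC⟩ x hx
    have hxs : Summable (bvIntTerm x) := hx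
    set g : ℕ → ℝ := bvIntTerm x with hg
    set V : ℝ := ∑' k, g k with hV
    set y : ℕ → ℂ := fun k => (k : ℂ) * x k with hy
    set b : ℕ → ℂ := fun k => a k / (k : ℂ) with hb
    have hC0 : 0 ≤ C := le_trans (norm_nonneg _) (hC 0)
    have hy0 : y 0 = 0 := by simp [hy]
    have hstep : ∀ i : ℕ, ‖y (i + 1) - y i‖ = g (i + 1) := by
      intro i
      simp [hy, hg, bvIntTerm, Nat.succ_sub_one]
    have hgnn : ∀ i, 0 ≤ g i := fun i => norm_nonneg _
    have hyb : ∀ m : ℕ, ‖y m‖ ≤ V := by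
      intro m
      have h1 : y m = ∑ i ∈ Finset.range m, (y (i + 1) - y i) := by
        rw [Finset.sum_range_sub]; simp [hy0]
      calc ‖y m‖ ≤ ∑ i ∈ Finset.range m, ‖y (i + 1) - y i‖ := by
            rw [h1]; exact norm_sum_le _ _
        _ = ∑ i ∈ Finset.range m, g (i + 1) := by simp [hstep]
        _ ≤ ∑ i ∈ Finset.range (m + 1), g i := by
            rw [Finset.sum_range_succ']
            have := hgnn 0
            linarith
        _ ≤ V := Summable.sum_le_tsum _ (fun i _ => hgnn i) hxs
    refine ⟨‖a 0 * x 0‖ + (V * C + V * C), fun n => ?_⟩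
    have hA : ∑ k ∈ Finset.range (n + 1), a k * x k
        = a 0 * x 0 + ∑ k ∈ Finset.range (n + 1), y k * b k := by
      rw [Finset.sum_range_succ' (fun k => a k * x k),
        Finset.sum_range_succ' (fun k => y k * b k)]
      have ht : ∀ i : ℕ, y (i + 1) * b (i + 1) = a (i + 1) * x (i + 1) := by
        intro i
        have hk : ((i + 1 : ℕ) : ℂ) ≠ 0 := by exact_mod_cast Nat.succ_ne_zero i
        push_cast at hk
        simp only [hy, hb]
        push_cast
        field_simp
      simp only [ht]
      simp [hy0]
      ring
    have hparts := Finset.sum_range_by_parts y b (n + 1)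
    simp only [smul_eq_mul, Nat.add_sub_cancel] at hparts
    have hbound : ‖∑ k ∈ Finset.range (n + 1), y k * b k‖ ≤ V * C + V * C := by
      rw [hparts]
      have h2 : ‖y n * ∑ i ∈ Finset.range (n + 1), b i‖ ≤ V * C := by
        rw [norm_mul]
        exact mul_le_mul (hyb n) (hC n) (norm_nonneg _) (le_trans (norm_nonneg _) (hyb n))
      have h3 : ‖∑ i ∈ Finset.range n, (y (i + 1) - y i) * ∑ j ∈ Finset.range (i + 1), b j‖
          ≤ V * C := by
        calc ‖∑ i ∈ Finset.range n, (y (i + 1) - y i) * ∑ j ∈ Finset.range (i + 1), b j‖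
            ≤ ∑ i ∈ Finset.range n, ‖(y (i + 1) - y i) * ∑ j ∈ Finset.range (i + 1), b j‖ :=
              norm_sum_le _ _
          _ ≤ ∑ i ∈ Finset.range n, g (i + 1) * C := by
              refine Finset.sum_le_sum fun i _ => ?_
              rw [norm_mul, hstep i]
              exact mul_le_mul_of_nonneg_left (hC i) (hgnn (i + 1))
          _ = (∑ i ∈ Finset.range n, g (i + 1)) * C := by rw [Finset.sum_mul]
          _ ≤ V * C := by
              refine mul_le_mul_of_nonneg_right ?_ hC0
              calc ∑ i ∈ Finset.range n, g (i + 1)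
                  ≤ ∑ i ∈ Finset.range (n + 1), g i := by
                    rw [Finset.sum_range_succ']
                    have := hgnn 0
                    linarith
                _ ≤ V := Summable.sum_le_tsum _ (fun i _ => hgnn i) hxs
      calc ‖y n * ∑ i ∈ Finset.range (n + 1), b i -
            ∑ i ∈ Finset.range n, (y (i + 1) - y i) * ∑ j ∈ Finset.range (i + 1), b j‖
          ≤ ‖y n * ∑ i ∈ Finset.range (n + 1), b i‖ +
            ‖∑ i ∈ Finset.range n, (y (i + 1) - y i) * ∑ j ∈ Finset.range (i + 1), b j‖ :=
            norm_sub_le _ _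
        _ ≤ V * C + V * C := add_le_add h2 h3
    rw [hA]
    calc ‖a 0 * x 0 + ∑ k ∈ Finset.range (n + 1), y k * b k‖
        ≤ ‖a 0 * x 0‖ + ‖∑ k ∈ Finset.range (n + 1), y k * b k‖ := norm_add_le _ _
      _ ≤ ‖a 0 * x 0‖ + (V * C + V * C) := by linarith [hbound]
end

section
/- Let A = (a_{nk}) be an infinite matrix, Y a sequence space, and define H = (h_{nk}) by h_{nk} = n·a_{nk} − (n−1)·a_{n−1,k} (with a_{0,k} = 0). Then A maps Y into ∫bv if and only if H maps Y into ℓ₁. -/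
/-- The matrix `H`, `h_{nk} = n·a_{nk} − (n−1)·a_{n−1,k}` (with `a_{0,k} = 0`,
realized by the vanishing coefficients at `n = 0, 1`). -/
noncomputable def Hmat (A : ℕ → ℕ → ℂ) (n k : ℕ) : ℂ :=
  (n : ℂ) * A n k - ((n - 1 : ℕ) : ℂ) * A (n - 1) k

/-- Let `Y` be a sequence space and suppose all relevant series converge
(`Aₙ ∈ Y^β` for each `n`).  Then `A` maps `Y` into `∫bv` if and only if
`H` maps `Y` into `ℓ₁`. -/
theorem matrix_into_bvInt_iff (A : ℕ → ℕ → ℂ) (Y : Set (ℕ → ℂ))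
    (hconv : ∀ z ∈ Y, ∀ n : ℕ, Summable (fun k => A n k * z k)) :
    (∀ z ∈ Y, MemBvInt (fun n => ∑' k : ℕ, A n k * z k)) ↔
    (∀ z ∈ Y, Summable (fun n : ℕ => ‖∑' k : ℕ, Hmat A n k * z k‖)) := by
  have key : ∀ z ∈ Y, ∀ n : ℕ,
      bvIntTerm (fun n => ∑' k : ℕ, A n k * z k) n = ‖∑' k : ℕ, Hmat A n k * z k‖ := by
    intro z hz n
    have h1 : Summable (fun k => A n k * z k) := hconv z hz n
    have h2 : Summable (fun k => A (n-1) k * z k) := hconv z hz (n-1)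
    have : (∑' k : ℕ, Hmat A n k * z k)
        = (n : ℂ) * (∑' k, A n k * z k) - ((n-1 : ℕ) : ℂ) * (∑' k, A (n-1) k * z k) := by
      rw [← tsum_mul_left, ← tsum_mul_left, ← Summable.tsum_sub (h1.mul_left _) (h2.mul_left _)]
      congr 1; funext k; simp [Hmat]; ring
    simp [bvIntTerm, this]
  constructor
  · intro h z hz
    have := h z hz
    unfold MemBvInt at this
    exact this.congr (key z hz)
  · intro h z hz
    exact (h z hz).congr (fun n => (key z hz n).symm)
end
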